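/- For every integer sequence X of length n ≥ 1, loss(X) ∈ {2·gap(X), 2·gap(X)+1}, and consequently gap(X) = ⌊loss(X)/2⌋; in particular, for two distinct gap values δ₁ ≠ δ₂ the loss intervals {2δ₁, 2δ₁+1} and {2δ₂, 2δ₂+1} are disjoint, where gap and loss are taken with respect to nb_peak. -/
import Mathlib


/-- The signature of an integer sequence: the word over `{<,=,>}` (encoded as
`Ordering.lt`, `Ordering.eq`, `Ordering.gt`) comparing consecutive elements. -/
def signature (X : List ℤ) : List Ordering :=
  List.zipWith compare X X.tail

/-- The number of peaks of a word `w` over `{<,=,>}`: the number of positions `j`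
with `w_j = '>'` such that there is `i < j` with `w_i = '<'` and `w_k = '='`
for all `i < k < j`. -/
noncomputable def nbPeak (w : List Ordering) : ℕ :=
  {j : ℕ | w[j]? = some Ordering.gt ∧
    ∃ i < j, w[i]? = some Ordering.lt ∧
      ∀ k, i < k → k < j → w[k]? = some Ordering.eq}.ncard

/-- The gap of an integer sequence `X` of length `n` with respect to `nb_peak`:
`⌊(n−1)/2⌋ − nb_peak(X)`. -/
noncomputable def gap (X : List ℤ) : ℕ :=
  (X.length - 1) / 2 - nbPeak (signature X)

/-- The minimum length of an integer sequence having exactly `r` peaks. -/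
noncomputable def minLen (r : ℕ) : ℕ :=
  sInf {m : ℕ | ∃ Y : List ℤ, Y ≠ [] ∧ Y.length = m ∧ nbPeak (signature Y) = r}

/-- The loss of an integer sequence `X` of length `n` with respect to `nb_peak`:
`n − m`, where `m` is the minimum length of an integer sequence with the same
number of peaks as `X`. -/
noncomputable def loss (X : List ℤ) : ℕ :=
  X.length - minLen (nbPeak (signature X))

/-- Peak set of a word. -/
def peakSet (w : List Ordering) : Set ℕ :=
  {j : ℕ | w[j]? = some Ordering.gt ∧
    ∃ i < j, w[i]? = some Ordering.lt ∧
      ∀ k, i < k → k < j → w[k]? = some Ordering.eq}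

lemma nbPeak_eq (w : List Ordering) : nbPeak w = (peakSet w).ncard := rfl

lemma mem_peak_lt_len {w : List Ordering} {j : ℕ} (h : j ∈ peakSet w) : j < w.length := by
  by_contra hc
  have := h.1
  rw [List.getElem?_eq_none (by omega)] at this
  simp at this

lemma not_adjacent_peaks {w : List Ordering} {j : ℕ}
    (hgt : w[j]? = some Ordering.gt) (h : j + 1 ∈ peakSet w) : False := by
  obtain ⟨_, i, hij, hlt, heq⟩ := h
  rcases lt_trichotomy i j with h1 | h1 | h1
  · have := heq j h1 (by omega)
    rw [hgt] at this; simp at this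
  · subst h1; rw [hgt] at hlt; simp at hlt
  · omega

lemma peak_pos {w : List Ordering} {j : ℕ} (h : j ∈ peakSet w) : 1 ≤ j := by
  obtain ⟨_, i, hij, _⟩ := h; omega

lemma nbPeak_le (w : List Ordering) : nbPeak w ≤ w.length / 2 := by
  rw [nbPeak_eq]
  have hinj : Set.InjOn (fun j => (j - 1) / 2) (peakSet w) := by
    intro a ha b hb hab
    simp only at hab
    have ha1 := peak_pos ha
    have hb1 := peak_pos hb
    rcases lt_trichotomy a b with h | h | h
    · exfalso
      have : b = a + 1 := by omega
      subst this
      exact not_adjacent_peaks ha.1 hb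
    · exact h
    · exfalso
      have : a = b + 1 := by omega
      subst this
      exact not_adjacent_peaks hb.1 ha
  have hsub : (fun j => (j - 1) / 2) '' (peakSet w) ⊆ ↑(Finset.range (w.length / 2)) := by
    rintro x ⟨j, hj, rfl⟩
    have h1 := mem_peak_lt_len hj
    have h2 := peak_pos hj
    simp only [Finset.coe_range, Set.mem_Iio]
    omega
  calc (peakSet w).ncard = ((fun j => (j - 1) / 2) '' (peakSet w)).ncard :=
        (Set.ncard_image_of_injOn hinj).symm
    _ ≤ (↑(Finset.range (w.length / 2)) : Set ℕ).ncard :=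
        Set.ncard_le_ncard hsub (Finset.finite_toSet _)
    _ = w.length / 2 := by rw [Set.ncard_coe_finset, Finset.card_range]

lemma length_signature (X : List ℤ) : (signature X).length = X.length - 1 := by
  simp [signature, List.length_zipWith, List.length_tail]

/-- Zigzag integer sequence with r peaks and length 2r+1. -/
def Z : ℕ → List ℤ
  | 0 => [0]
  | r + 1 => 0 :: 1 :: Z r

/-- Its signature. -/
def W : ℕ → List Ordering
  | 0 => []
  | r + 1 => .lt :: .gt :: W r

lemma Z_head (r : ℕ) : ∃ t, Z r = (0 : ℤ) :: t := by
  cases r <;> exact ⟨_, rfl⟩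

lemma Z_length (r : ℕ) : (Z r).length = 2 * r + 1 := by
  induction r with
  | zero => rfl
  | succ r ih => simp [Z, ih]; omega

lemma sig_cons (a b : ℤ) (l : List ℤ) :
    signature (a :: b :: l) = compare a b :: signature (b :: l) := rfl

lemma sig_Z (r : ℕ) : signature (Z r) = W r := by
  induction r with
  | zero => rfl
  | succ r ih =>
    obtain ⟨t, ht⟩ := Z_head r
    show signature (0 :: 1 :: Z r) = Ordering.lt :: Ordering.gt :: W r
    rw [ht, sig_cons, sig_cons, ← ht, ih]
    norm_num [compare_lt_iff_lt, compare_gt_iff_gt]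

lemma W_length (r : ℕ) : (W r).length = 2 * r := by
  induction r with
  | zero => rfl
  | succ r ih => simp [W, ih]; omega

lemma W_get (r : ℕ) : ∀ j, j < 2 * r →
    (W r)[j]? = some (if j % 2 = 0 then Ordering.lt else Ordering.gt) := by
  induction r with
  | zero => omega
  | succ r ih =>
    intro j hj
    match j with
    | 0 => simp [W]
    | 1 => simp [W]
    | (j + 2) =>
      simp only [W, List.getElem?_cons_succ]
      rw [ih j (by omega)]
      congr 1
      have : (j + 2) % 2 = j % 2 := by omega
      rw [this]

lemma peakSet_W (r : ℕ) : peakSet (W r) = {j | j < 2 * r ∧ j % 2 = 1} := by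
  ext j
  constructor
  · rintro ⟨hgt, i, hij, hlt, heq⟩
    have hjlen : j < 2 * r := by
      by_contra hc
      rw [List.getElem?_eq_none (by rw [W_length]; omega)] at hgt
      simp at hgt
    refine ⟨hjlen, ?_⟩
    by_contra h
    have h0 : j % 2 = 0 := by omega
    rw [W_get r j hjlen, h0] at hgt
    simp at hgt
  · rintro ⟨hj, hodd⟩
    refine ⟨?_, j - 1, by omega, ?_, ?_⟩
    · rw [W_get r j hj]; simp [hodd]
    · rw [W_get r (j - 1) (by omega)]
      have : (j - 1) % 2 = 0 := by omega
      simp [this]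
    · intro k hk1 hk2; omega

lemma nbPeak_W (r : ℕ) : nbPeak (W r) = r := by
  rw [nbPeak_eq, peakSet_W]
  have himg : {j | j < 2 * r ∧ j % 2 = 1} = (fun k => 2 * k + 1) '' Set.Iio r := by
    ext j
    simp only [Set.mem_setOf_eq, Set.mem_image, Set.mem_Iio]
    constructor
    · rintro ⟨h1, h2⟩; exact ⟨j / 2, by omega, by omega⟩
    · rintro ⟨k, hk, rfl⟩; omega
  rw [himg, Set.ncard_image_of_injective _ (fun a b h => by omega)]
  rw [← Finset.coe_range, Set.ncard_coe_finset, Finset.card_range]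

lemma minLen_eq (r : ℕ) : minLen r = 2 * r + 1 := by
  have hmem : 2 * r + 1 ∈
      {m : ℕ | ∃ Y : List ℤ, Y ≠ [] ∧ Y.length = m ∧ nbPeak (signature Y) = r} := by
    refine ⟨Z r, ?_, Z_length r, by rw [sig_Z]; exact nbPeak_W r⟩
    obtain ⟨t, ht⟩ := Z_head r; rw [ht]; simp
  refine le_antisymm (Nat.sInf_le hmem) ?_
  apply le_csInf ⟨_, hmem⟩
  rintro m ⟨Y, hY, rfl, hr⟩
  have h1 := nbPeak_le (signature Y)
  rw [hr, length_signature] at h1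
  have h2 : 1 ≤ Y.length := List.length_pos_iff.mpr hY
  omega


/-- For every integer sequence `X` of length `n ≥ 1`,
`loss(X) ∈ {2·gap(X), 2·gap(X)+1}`, and consequently `gap(X) = ⌊loss(X)/2⌋`;
moreover for two distinct gap values `δ₁ ≠ δ₂` the loss intervals
`{2δ₁, 2δ₁+1}` and `{2δ₂, 2δ₂+1}` are disjoint (gap and loss taken with
respect to `nb_peak`). -/
theorem loss_mem_and_gap_eq (X : List ℤ) (hX : X ≠ []) :
    (loss X = 2 * gap X ∨ loss X = 2 * gap X + 1) ∧
    gap X = loss X / 2 ∧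
    ∀ δ₁ δ₂ : ℕ, δ₁ ≠ δ₂ →
      Disjoint ({2 * δ₁, 2 * δ₁ + 1} : Set ℕ) ({2 * δ₂, 2 * δ₂ + 1} : Set ℕ) := by
  have hb := nbPeak_le (signature X)
  rw [length_signature] at hb
  have hn : 1 ≤ X.length := List.length_pos_iff.mpr hX
  have hloss : loss X = X.length - (2 * nbPeak (signature X) + 1) := by
    rw [loss, minLen_eq]
  have hgap : gap X = (X.length - 1) / 2 - nbPeak (signature X) := rfl
  refine ⟨?_, ?_, ?_⟩
  · rw [hloss, hgap]; omega
  · rw [hloss, hgap]; omega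
  · intro δ₁ δ₂ hne
    rw [Set.disjoint_left]
    intro a ha hb
    simp only [Set.mem_insert_iff, Set.mem_singleton_iff] at ha hb
    omega
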